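/- Let s > 1 be a real number and let h : ℍ → ℂ be a continuous function on the upper half plane that is invariant under the action of SL(2,ℤ) by Möbius transformations. Suppose there is a constant C > 0 such that |h(x+iy)| ≤ C·y^s for every point x+iy in the standard fundamental domain F = { x+iy : |x| ≤ 1/2, x²+y² ≥ 1, y > 0 }. Then |h(Ω)| ≤ C·E_s(Ω) for every Ω ∈ ℍ, where E_s is the non-holomorphic Eisenstein series; in particular E_s(Ω) is real and satisfies E_s(x+iy) ≥ y^s for all x+iy ∈ F. -/

import Mathlib

open Real MeasureTheory

/-- Riemann zeta function for real arguments `s > 1`, as a sum. -/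
noncomputable def zetaR (s : ℝ) : ℝ := ∑' n : ℕ, 1 / ((n : ℝ) + 1) ^ s

/-- The non-holomorphic Eisenstein series `E_s(z)` (real-valued), for `s > 1`. -/
noncomputable def eis:=fun (s : ℝ) (z : ℂ) =>
  (1 / (2 * zetaR (2 * s))) *
    ∑' p : {p : ℤ × ℤ // p ≠ 0},
      z.im ^ s / ‖(p.1.1 : ℂ) * z + (p.1.2 : ℂ)‖ ^ (2 * s)

/-!
Grouping the nonzero lattice points of `E_s(z)` into lines `ℤ • p` shows that every single term
`y^s / |cz + d|^{2s}` is at most `E_s(z)`: the line through `p` contributes `2 ζ(2s)` times the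
term of `p`. For `γ ∈ SL(2,ℤ)` with bottom row `(c, d)` that term is `Im(γ z)^s`, so choosing `γ`
with `γ z` in the fundamental domain gives `|h z| = |h (γ z)| ≤ C Im(γ z)^s ≤ C E_s(z)`,
and `γ = 1` gives `y^s ≤ E_s(z)`.
-/

open UpperHalfPlane ModularGroup MatrixGroups

noncomputable def eisTerm (s : ℝ) (z : ℂ) (p : ℤ × ℤ) : ℝ :=
  z.im ^ s / ‖(p.1 : ℂ) * z + p.2‖ ^ (2 * s)

lemma eisTerm_nonneg (s : ℝ) (z : ℍ) (p : ℤ × ℤ) : 0 ≤ eisTerm s z p := by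
  have := z.im_pos.le
  unfold eisTerm
  positivity

lemma eisTerm_zero {s : ℝ} (hs : s ≠ 0) (z : ℂ) : eisTerm s z 0 = 0 := by
  simp [eisTerm, Real.zero_rpow (mul_ne_zero two_ne_zero hs)]

lemma eisTerm_zsmul (s : ℝ) (z : ℂ) (n : ℤ) (p : ℤ × ℤ) :
    eisTerm s z (n • p) = eisTerm s z p / |(n : ℝ)| ^ (2 * s) := by
  have hlin : ((n • p).1 : ℂ) * z + (n • p).2 = n * ((p.1 : ℂ) * z + p.2) := by
    simp only [Prod.smul_fst, Prod.smul_snd, smul_eq_mul]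
    push_cast
    ring
  rw [eisTerm, eisTerm, hlin, norm_mul, Complex.norm_intCast,
    Real.mul_rpow (abs_nonneg _) (norm_nonneg _), div_div, mul_comm]

lemma summable_norm_mul_add_rpow_neg {k : ℝ} (hk : 2 < k) (z : ℍ) :
    Summable fun q : ℤ × ℤ => ‖(q.1 : ℂ) * z + q.2‖ ^ (-k) := by
  have hbound : Summable fun q : ℤ × ℤ => EisensteinSeries.r z ^ (-k) * ‖![q.1, q.2]‖ ^ (-k) :=
    (finTwoArrowEquiv ℤ).symm.summable_iff.mpr
      ((EisensteinSeries.summable_one_div_norm_rpow hk).mul_left _)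
  refine hbound.of_nonneg_of_le (fun q => by positivity) fun q => ?_
  simpa using EisensteinSeries.summand_bound z (by linarith) ![q.1, q.2]

lemma summable_eisTerm {s : ℝ} (hs : 1 < s) (z : ℍ) : Summable (eisTerm s z) := by
  refine ((summable_norm_mul_add_rpow_neg (by linarith : 2 < 2 * s) z).mul_left (z.im ^ s)).congr
    fun q => ?_
  rw [eisTerm, Real.rpow_neg (norm_nonneg _), div_eq_mul_inv, coe_im]

lemma hasSum_zetaR {s : ℝ} (hs : 1 < s) :
    HasSum (fun n : ℕ => 1 / ((n : ℝ) + 1) ^ s) (zetaR s) := by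
  refine Summable.hasSum ?_
  simpa using (summable_nat_add_iff 1).mpr (Real.summable_one_div_nat_rpow.mpr hs)

lemma zetaR_pos {s : ℝ} (hs : 1 < s) : 0 < zetaR s :=
  (hasSum_zetaR hs).summable.tsum_pos (fun _ => by positivity) 0 (by positivity)

lemma hasSum_int_one_div_abs_rpow {s : ℝ} (hs : 1 < s) :
    HasSum (fun n : ℤ => 1 / |(n : ℝ)| ^ s) (2 * zetaR s) := by
  have hpos : HasSum (fun n : ℕ => 1 / |((n + 1 : ℤ) : ℝ)| ^ s) (zetaR s) := by
    refine (hasSum_zetaR hs).congr_fun fun n => ?_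
    rw [abs_of_pos (by positivity)]
    push_cast; rfl
  have hneg : HasSum (fun n : ℕ => 1 / |((-(n + 1) : ℤ) : ℝ)| ^ s) (zetaR s) := by
    refine (hasSum_zetaR hs).congr_fun fun n => ?_
    rw [Int.cast_neg, abs_neg, abs_of_pos (by positivity)]
    push_cast; rfl
  have := HasSum.of_add_one_of_neg_add_one (f := fun n : ℤ => 1 / |(n : ℝ)| ^ s) hpos hneg
  rwa [Int.cast_zero, abs_zero, Real.zero_rpow (by linarith), div_zero, add_zero, ← two_mul] at this

lemma tsum_eisTerm_zsmul {s : ℝ} (hs : 1 < s) (z : ℂ) (p : ℤ × ℤ) :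
    ∑' n : ℤ, eisTerm s z (n • p) = 2 * zetaR (2 * s) * eisTerm s z p := by
  simp_rw [eisTerm_zsmul, div_eq_mul_one_div (eisTerm s z p)]
  rw [((hasSum_int_one_div_abs_rpow (by linarith : 1 < 2 * s)).mul_left _).tsum_eq, mul_comm]

lemma eis_eq_tsum {s : ℝ} (hs : s ≠ 0) (z : ℂ) :
    eis s z = 1 / (2 * zetaR (2 * s)) * ∑' q, eisTerm s z q := by
  rw [← tsum_subtype_eq_of_support_subset (s := {q : ℤ × ℤ | q ≠ 0})]
  · rfl
  · intro q hq hq0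
    exact hq (by rw [hq0, eisTerm_zero hs])

theorem eisTerm_le_eis {s : ℝ} (hs : 1 < s) (z : ℍ) {p : ℤ × ℤ} (hp : p ≠ 0) :
    eisTerm s z p ≤ eis s z := by
  have hZ : 0 < 2 * zetaR (2 * s) := by have := zetaR_pos (by linarith : 1 < 2 * s); positivity
  have hline : 2 * zetaR (2 * s) * eisTerm s z p ≤ ∑' q, eisTerm s z q := by
    rw [← tsum_eisTerm_zsmul hs]
    exact tsum_comp_le_tsum_of_inj (summable_eisTerm hs z) (eisTerm_nonneg s z)
      (smul_left_injective ℤ hp)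
  rw [eis_eq_tsum (by linarith), one_div_mul_eq_div, le_div_iff₀ hZ, mul_comm]
  exact hline

theorem im_smul_rpow_eq_eisTerm (s : ℝ) (γ : SL(2, ℤ)) (z : ℍ) :
    (γ • z).im ^ s = eisTerm s z (γ 1 0, γ 1 1) := by
  rw [ModularGroup.im_smul_eq_div_normSq, denom_apply, ← Complex.sq_norm,
    Real.div_rpow z.im_pos.le (sq_nonneg _), ← Real.rpow_natCast, ← Real.rpow_mul (norm_nonneg _)]
  simp [eisTerm, mul_comm]

theorem im_smul_rpow_le_eis {s : ℝ} (hs : 1 < s) (γ : SL(2, ℤ)) (z : ℍ) :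
    (γ • z).im ^ s ≤ eis s z := by
  rw [im_smul_rpow_eq_eisTerm]
  refine eisTerm_le_eis hs z fun h0 => ?_
  obtain ⟨hc, hd⟩ := Prod.mk_eq_zero.mp h0
  exact not_isCoprime_zero_zero (hc ▸ hd ▸ bottom_row_coprime γ)

theorem bounded_by_eisenstein (s : ℝ) (hs : 1 < s) (h : UpperHalfPlane → ℂ)
    (hinv : ∀ (γ : Matrix.SpecialLinearGroup (Fin 2) ℤ) (z : UpperHalfPlane),
      h (γ • z) = h z)
    (C : ℝ) (hC : 0 < C)
    (hbound : ∀ z : UpperHalfPlane, |z.re| ≤ 1 / 2 → 1 ≤ z.re ^ 2 + z.im ^ 2 →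
      ‖h z‖ ≤ C * z.im ^ s) :
    (∀ z : UpperHalfPlane, ‖h z‖ ≤ C * eis s (z : ℂ)) ∧
    (∀ z : UpperHalfPlane, |z.re| ≤ 1 / 2 → 1 ≤ z.re ^ 2 + z.im ^ 2 →
      z.im ^ s ≤ eis s (z : ℂ)) := by
  refine ⟨fun z => ?_, fun z _ _ => by simpa using im_smul_rpow_le_eis hs 1 z⟩
  obtain ⟨γ, hnormSq, hre⟩ := exists_smul_mem_fd z
  have hnorm : 1 ≤ (γ • z).re ^ 2 + (γ • z).im ^ 2 := by
    simpa [Complex.normSq_apply, sq] using hnormSq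
  calc ‖h z‖ = ‖h (γ • z)‖ := by rw [hinv]
    _ ≤ C * (γ • z).im ^ s := hbound _ hre hnorm
    _ ≤ C * eis s z := mul_le_mul_of_nonneg_left (im_smul_rpow_le_eis hs γ z) hC.le
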